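/- Under the Algorithm 1 setup with the F-local attack model and 𝓑 ≠ ∅: if G is ((d+1)F+1)-robust, then all benign agents achieve consensus exponentially, regardless of the values sent by the misbehaving agents; that is, there exist x̄ ∈ ℝ^d, C ≥ 0, and γ ∈ [0, 1) such that ‖x^i(k) − x̄‖ ≤ C·γ^k for every i ∈ 𝓑 and every k ≥ 0. -/

import Mathlib

/-- `Psi x n` is the intersection, over all subsets `S` of the (finite) index set
with `|S| = m - n` (where `m` is the cardinality of the index set), of the convex
hull of the points indexed by `S`. -/
def Psi {d : ℕ} {ι : Type*} [Fintype ι] (x : ι → (Fin d → ℝ)) (n : ℕ) :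
    Set (Fin d → ℝ) :=
  ⋂ S ∈ {S : Finset ι | S.card = Fintype.card ι - n},
    convexHull ℝ (x '' (S : Set ι))

/-- The setup of Algorithm 1: `G` is the (undirected) communication graph on the
finite vertex set `V` in which every vertex has at least `(d+1)F + 1` neighbors,
`Fset` is the set of misbehaving agents, `x k i` is the state of agent `i` at time
`k`, and `msg k j i` is the value agent `j` sends to agent `i` at time `k` (equal
to `x k j` whenever `j` is benign).  Every benign agent `i` updates at time `k` by
sorting on coordinate `p = (k % d) + 1` (0-indexed: `k % d`): it chooses sets
`Y`, `Z` of `(d+1)F + 1` neighbors whose received values are smallest (resp.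
largest) in that coordinate, picks middle points `y ∈ Ψ(Y-values, F)` and
`z ∈ Ψ(Z-values, F)`, and sets `x (k+1) i = (x k i + y + z) / 3`. -/
structure Algo1 {V : Type*} [Fintype V] [DecidableEq V]
    (d F : ℕ) (hd : 0 < d) (G : SimpleGraph V) [DecidableRel G.Adj]
    (Fset : Finset V) (x : ℕ → V → (Fin d → ℝ))
    (msg : ℕ → V → V → (Fin d → ℝ)) : Prop where
  degree : ∀ i : V, (d + 1) * F + 1 ≤ (G.neighborFinset i).card
  benign_msg : ∀ (k : ℕ) (j i : V), j ∉ Fset → msg k j i = x k j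
  update : ∀ (k : ℕ) (i : V), i ∉ Fset →
    ∃ (Y Z : Finset V) (yv zv : Fin d → ℝ),
      Y ⊆ G.neighborFinset i ∧ Z ⊆ G.neighborFinset i ∧
      Y.card = (d + 1) * F + 1 ∧ Z.card = (d + 1) * F + 1 ∧
      (∀ a ∈ Y, ∀ b ∈ G.neighborFinset i, b ∉ Y →
        msg k a i ⟨k % d, Nat.mod_lt k hd⟩ ≤ msg k b i ⟨k % d, Nat.mod_lt k hd⟩) ∧
      (∀ a ∈ Z, ∀ b ∈ G.neighborFinset i, b ∉ Z →
        msg k b i ⟨k % d, Nat.mod_lt k hd⟩ ≤ msg k a i ⟨k % d, Nat.mod_lt k hd⟩) ∧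
      yv ∈ Psi (fun j : Y => msg k j i) F ∧
      zv ∈ Psi (fun j : Z => msg k j i) F ∧
      x (k + 1) i = ((1 : ℝ) / 3) • (x k i + yv + zv)

/-- A graph is `r`-robust if for every pair of disjoint nonempty proper subsets
`V₁, V₂` of the vertex set, some agent in `V₁` has at least `r` neighbors outside
`V₁`, or some agent in `V₂` has at least `r` neighbors outside `V₂`. -/
def RRobust {V : Type*} [Fintype V] [DecidableEq V]
    (G : SimpleGraph V) [DecidableRel G.Adj] (r : ℕ) : Prop :=
  ∀ V₁ V₂ : Finset V, V₁.Nonempty → V₂.Nonempty → Disjoint V₁ V₂ →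
    V₁ ≠ Finset.univ → V₂ ≠ Finset.univ →
    (∃ i ∈ V₁, r ≤ (G.neighborFinset i \ V₁).card) ∨
    (∃ i ∈ V₂, r ≤ (G.neighborFinset i \ V₂).card)

/-- A graph is `(r, s)`-robust if for every pair of disjoint nonempty proper
subsets `V₁, V₂` of the vertex set, either every agent in `V₁` has at least `r`
neighbors outside `V₁`, or every agent in `V₂` has at least `r` neighbors outside
`V₂`, or at least `s` agents in `V₁ ∪ V₂` have at least `r` neighbors outside the
set among `V₁`, `V₂` containing them. -/
def RSRobust {V : Type*} [Fintype V] [DecidableEq V]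
    (G : SimpleGraph V) [DecidableRel G.Adj] (r s : ℕ) : Prop :=
  ∀ V₁ V₂ : Finset V, V₁.Nonempty → V₂.Nonempty → Disjoint V₁ V₂ →
    V₁ ≠ Finset.univ → V₂ ≠ Finset.univ →
    (∀ i ∈ V₁, r ≤ (G.neighborFinset i \ V₁).card) ∨
    (∀ i ∈ V₂, r ≤ (G.neighborFinset i \ V₂).card) ∨
    s ≤ ((V₁.filter (fun i => r ≤ (G.neighborFinset i \ V₁).card)) ∪
         (V₂.filter (fun i => r ≤ (G.neighborFinset i \ V₂).card))).card

/-!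
Fix a coordinate `p`. Each middle point computed by a benign agent lies in the convex hull of
`dF + 1` benign values, because at most `F` of the `(d+1)F + 1` chosen neighbours misbehave; so
the benign maximum in `p` never increases. Negating all states and messages is again a run of the
algorithm, which turns statements about maxima into statements about minima.

Let `D` be the benign spread in `p` at time `k₀` and `ηₛ = D / (2·3ˢ)`. The benign agents within
`ηₛ` of the maximum, resp. minimum, at time `k₀ + s` form two disjoint shrinking sets. Whenever
coordinate `p` is the sorted one and both are nonempty, robustness gives an agent of one of them
with `(d+1)F + 1` neighbours outside it, `dF + 1` of them benign, and the low (resp. high) middle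
point pulls that agent out of its set. Hence after `(n+1)d` steps, `n` the number of benign
agents, one set is empty and the spread has dropped by `η_{(n+1)d}`. Iterating gives geometric
decay of the spread, and the benign states converge to the common limit of maxima and minima.
-/

open Finset

section Psi

variable {d : ℕ} {V : Type*} {g : V → Fin d → ℝ} {n : ℕ} {v : Fin d → ℝ}

lemma mem_of_mem_Psi_of_subset {Y S : Finset V} {K : Set (Fin d → ℝ)} (hK : Convex ℝ K)
    (hv : v ∈ Psi (fun j : Y => g j) n) (hSY : S ⊆ Y) (hcard : #Y - n ≤ #S)
    (hSK : ∀ j ∈ S, g j ∈ K) : v ∈ K := by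
  classical
  obtain ⟨T, hTS, hT⟩ := exists_subset_card_eq hcard
  have hTY : T ⊆ Y := hTS.trans hSY
  have hsub : #(T.subtype (· ∈ Y)) = Fintype.card Y - n := by
    rw [card_subtype, filter_true_of_mem hTY, hT, Fintype.card_coe]
  have hhull := Set.mem_iInter₂.1 hv _ hsub
  refine convexHull_min ?_ hK hhull
  rintro _ ⟨j, hj, rfl⟩
  exact hSK j (hTS (by simpa using hj))

lemma mem_of_mem_Psi_of_card_inter_le [DecidableEq V] {Y B : Finset V} {K : Set (Fin d → ℝ)}
    (hK : Convex ℝ K) (hv : v ∈ Psi (fun j : Y => g j) n) (hbad : #(Y ∩ B) ≤ n)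
    (hgood : ∀ j ∈ Y, j ∉ B → g j ∈ K) : v ∈ K := by
  refine mem_of_mem_Psi_of_subset (S := Y \ B) hK hv sdiff_subset ?_ fun j hj => ?_
  · have := card_sdiff_add_card_inter Y B
    omega
  · rw [mem_sdiff] at hj
    exact hgood j hj.1 hj.2

lemma le_card_filter_of_sorted {N Y W : Finset V} {u : V → ℝ} {c : ℝ} {t : ℕ}
    (hsorted : ∀ a ∈ Y, ∀ b ∈ N, b ∉ Y → u a ≤ u b) (hWN : W ⊆ N) (hWc : ∀ j ∈ W, u j ≤ c)
    (hY : t ≤ #Y) (hW : t ≤ #W) : t ≤ #(Y.filter (u · ≤ c)) := by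
  by_cases hWY : W ⊆ Y
  · exact hW.trans (card_le_card fun j hj => mem_filter.2 ⟨hWY hj, hWc j hj⟩)
  · obtain ⟨b, hbW, hbY⟩ := not_subset.1 hWY
    rwa [filter_true_of_mem fun a ha => (hsorted a ha b (hWN hbW) hbY).trans (hWc b hbW)]

lemma convex_coord_le (p : Fin d) (c : ℝ) : Convex ℝ {w : Fin d → ℝ | w p ≤ c} :=
  convex_halfSpace_le (f := fun w : Fin d → ℝ => w p) (LinearMap.proj p).isLinear c

lemma coord_le_of_mem_Psi_of_sorted {N Y W : Finset V} {p : Fin d} {c : ℝ}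
    (hv : v ∈ Psi (fun j : Y => g j) n)
    (hsorted : ∀ a ∈ Y, ∀ b ∈ N, b ∉ Y → g a p ≤ g b p) (hWN : W ⊆ N)
    (hWc : ∀ j ∈ W, g j p ≤ c) (hW : #Y - n ≤ #W) : v p ≤ c :=
  mem_of_mem_Psi_of_subset (convex_coord_le p c) hv (filter_subset _ Y)
    (le_card_filter_of_sorted hsorted hWN hWc (Nat.sub_le _ _) hW) fun _ hj => (mem_filter.1 hj).2

lemma neg_mem_Psi {ι : Type*} [Fintype ι] {f : ι → Fin d → ℝ} (hv : v ∈ Psi f n) :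
    -v ∈ Psi (fun j => -f j) n := by
  refine Set.mem_iInter₂.2 fun S hS => ?_
  rw [← Set.image_image Neg.neg f, Set.image_neg_eq_neg, convexHull_neg]
  exact Set.neg_mem_neg.2 (Set.mem_iInter₂.1 hv S hS)

end Psi

lemma exists_lt_add_mod_eq {d r : ℕ} (hr : r < d) (a : ℕ) : ∃ t < d, (a + t) % d = r := by
  have ha := Nat.div_add_mod a d
  have had := Nat.mod_lt a (hr.trans_le' (Nat.zero_le r))
  rcases le_or_gt (a % d) r with hle | hlt
  · refine ⟨r - a % d, by omega, ?_⟩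
    rw [show a + (r - a % d) = r + d * (a / d) by omega, Nat.add_mul_mod_self_left,
      Nat.mod_eq_of_lt hr]
  · refine ⟨r + d - a % d, by omega, ?_⟩
    rw [show a + (r + d - a % d) = r + d * (a / d) + d by omega, Nat.add_mod_right,
      Nat.add_mul_mod_self_left, Nat.mod_eq_of_lt hr]

lemma not_of_antitone_of_forall_exists_lt {P : ℕ → Prop} {f : ℕ → ℕ} {d N : ℕ}
    (hP : Antitone P) (hf : Antitone f)
    (hdrop : ∀ s, ∃ t, s ≤ t ∧ t < s + d ∧ (P t → f (t + 1) < f t)) (hN : f 0 ≤ N) :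
    ¬ P ((N + 1) * d) := by
  have key : ∀ j, P (j * d) → f (j * d) + j ≤ f 0 := by
    intro j
    induction j with
    | zero => simp
    | succ j ih =>
      intro hPj
      rw [Nat.succ_mul] at hPj ⊢
      obtain ⟨t, hst, hts, ht⟩ := hdrop (j * d)
      have h₁ := ht (hP (by omega) hPj)
      have h₂ := ih (hP (by omega) hPj)
      have h₃ := hf (show t + 1 ≤ j * d + d by omega)
      have h₄ := hf hst
      omega
  intro hPN
  have := key (N + 1) hPN
  omega

/-- The rate is `θ ^ (1 / L)`. -/
lemma exists_geometric_bound_of_le_mul {u : ℕ → ℝ} (hu : Antitone u) (hu₀ : 0 ≤ u 0) {L : ℕ}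
    (hL : 0 < L) {θ : ℝ} (hθ₀ : 0 < θ) (hθ₁ : θ < 1) (hstep : ∀ k, u (k + L) ≤ θ * u k) :
    ∃ C γ : ℝ, 0 ≤ C ∧ 0 ≤ γ ∧ γ < 1 ∧ ∀ k, u k ≤ C * γ ^ k := by
  have hpow : ∀ q, u (L * q) ≤ θ ^ q * u 0 := fun q => by
    induction q with
    | zero => simp
    | succ q ih =>
      calc u (L * (q + 1)) = u (L * q + L) := by rw [mul_add_one]
        _ ≤ θ * u (L * q) := hstep _
        _ ≤ θ * (θ ^ q * u 0) := by gcongr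
        _ = θ ^ (q + 1) * u 0 := by ring
  set γ := θ ^ ((L : ℝ)⁻¹)
  have hγ₀ : 0 ≤ γ := Real.rpow_nonneg hθ₀.le _
  have hγ₁ : γ < 1 := Real.rpow_lt_one hθ₀.le hθ₁ (by positivity)
  have hγL : γ ^ L = θ := Real.rpow_inv_natCast_pow hθ₀.le hL.ne'
  refine ⟨u 0 / θ, γ, div_nonneg hu₀ hθ₀.le, hγ₀, hγ₁, fun k => ?_⟩
  calc u k ≤ u (L * (k / L)) := hu (Nat.mul_div_le k L)
    _ ≤ θ ^ (k / L) * u 0 := hpow _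
    _ = u 0 / θ * (γ ^ L) ^ (k / L + 1) := by rw [hγL, pow_succ]; field_simp
    _ ≤ u 0 / θ * γ ^ k := by
      rw [← pow_mul]
      exact mul_le_mul_of_nonneg_left (pow_le_pow_of_le_one hγ₀ hγ₁.le
        (Nat.lt_mul_div_succ k hL).le) (div_nonneg hu₀ hθ₀.le)

lemma exists_forall_neg_le_le_of_antitone {a b : ℕ → ℝ} (ha : Antitone a) (hb : Antitone b)
    (hab : ∀ k, 0 ≤ a k + b k) : ∃ l, ∀ k, -b k ≤ l ∧ l ≤ a k := by
  have hbdd : BddBelow (Set.range a) :=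
    ⟨-b 0, Set.forall_mem_range.2 fun k => by linarith [hab k, hb (Nat.zero_le k)]⟩
  refine ⟨⨅ k, a k, fun k => ⟨le_ciInf fun k' => ?_, ciInf_le hbdd k⟩⟩
  linarith [hab (max k k'), hb (le_max_left k k'), ha (le_max_right k k')]

section Trajectory

variable {V : Type*} [Fintype V] [DecidableEq V] {d : ℕ} {Fset : Finset V}
  (hB : (Fsetᶜ : Finset V).Nonempty) {x : ℕ → V → Fin d → ℝ} {k : ℕ} {p : Fin d}

noncomputable def benignMax (x : ℕ → V → Fin d → ℝ) (k : ℕ) (p : Fin d) : ℝ :=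
  Fsetᶜ.sup' hB fun i => x k i p

noncomputable def levelAbove (Fset : Finset V) (x : ℕ → V → Fin d → ℝ) (k : ℕ) (p : Fin d)
    (c : ℝ) : Finset V :=
  Fsetᶜ.filter fun i => c < x k i p

lemma le_benignMax {i : V} (hi : i ∉ Fset) : x k i p ≤ benignMax hB x k p :=
  le_sup' (fun i => x k i p) (mem_compl.2 hi)

lemma benignMax_le {c : ℝ} (h : ∀ i ∉ Fset, x k i p ≤ c) : benignMax hB x k p ≤ c :=
  sup'_le hB _ fun i hi => h i (mem_compl.1 hi)

lemma benignMax_le_of_levelAbove_eq_empty {c : ℝ} (h : levelAbove Fset x k p c = ∅) :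
    benignMax hB x k p ≤ c :=
  benignMax_le hB fun i hi => not_lt.1 fun hlt =>
    (eq_empty_iff_forall_notMem.1 h) i (mem_filter.2 ⟨mem_compl.2 hi, hlt⟩)

-- Max minus min: the benign minimum is `-benignMax hB (-x) k p`.
noncomputable def benignSpread (x : ℕ → V → Fin d → ℝ) (k : ℕ) (p : Fin d) : ℝ :=
  benignMax hB x k p + benignMax hB (-x) k p

lemma benignSpread_nonneg : 0 ≤ benignSpread hB x k p := by
  have ⟨i, hi⟩ := hB
  have h₁ := le_benignMax hB (x := x) (k := k) (p := p) (mem_compl.1 hi)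
  have h₂ := le_benignMax hB (x := -x) (k := k) (p := p) (mem_compl.1 hi)
  simp only [Pi.neg_apply] at h₂
  unfold benignSpread
  linarith

lemma abs_sub_le_benignSpread {i : V} (hi : i ∉ Fset) {l : ℝ}
    (hl : -benignMax hB (-x) k p ≤ l ∧ l ≤ benignMax hB x k p) :
    |x k i p - l| ≤ benignSpread hB x k p := by
  have h₁ := le_benignMax hB (x := x) (k := k) (p := p) hi
  have h₂ := le_benignMax hB (x := -x) (k := k) (p := p) hi
  simp only [Pi.neg_apply] at h₂
  rw [abs_sub_le_iff, benignSpread]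
  constructor <;> linarith [hl.1, hl.2]

lemma disjoint_levelAbove_neg {c c' η : ℝ} (hη : 2 * η ≤ c + c') :
    Disjoint (levelAbove Fset x k p (c - η)) (levelAbove Fset (-x) k p (c' - η)) := by
  refine disjoint_left.2 fun i hi hi' => ?_
  simp only [levelAbove, mem_filter, Pi.neg_apply] at hi hi'
  linarith [hi.2, hi'.2]

end Trajectory

namespace Algo1

variable {V : Type*} [Fintype V] [DecidableEq V] {d F : ℕ} {hd : 0 < d}
  {G : SimpleGraph V} [DecidableRel G.Adj] {Fset : Finset V}
  {x : ℕ → V → Fin d → ℝ} {msg : ℕ → V → V → Fin d → ℝ}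

/-- Negating all states and messages swaps the roles of the sets `Y` and `Z`. -/
lemma neg (h : Algo1 d F hd G Fset x msg) : Algo1 d F hd G Fset (-x) (-msg) where
  degree := h.degree
  benign_msg k j i hj := by simp only [Pi.neg_apply, h.benign_msg k j i hj]
  update k i hi := by
    obtain ⟨Y, Z, yv, zv, hY, hZ, hYc, hZc, hYs, hZs, hyv, hzv, hx⟩ := h.update k i hi
    refine ⟨Z, Y, -zv, -yv, hZ, hY, hZc, hYc, fun a ha b hb hbZ => ?_, fun a ha b hb hbY => ?_,
      neg_mem_Psi hzv, neg_mem_Psi hyv, ?_⟩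
    · simpa only [Pi.neg_apply, neg_le_neg_iff] using hZs a ha b hb hbZ
    · simpa only [Pi.neg_apply, neg_le_neg_iff] using hYs a ha b hb hbY
    · simp only [Pi.neg_apply, hx]
      module

variable (h : Algo1 d F hd G Fset x msg) (hB : (Fsetᶜ : Finset V).Nonempty)
  (hlocal : ∀ i : V, (Fset ∩ G.neighborFinset i).card ≤ F)
include h hlocal

lemma coord_le_benignMax {k : ℕ} {i : V} {Y : Finset V} {v : Fin d → ℝ}
    (hY : Y ⊆ G.neighborFinset i) (hv : v ∈ Psi (fun j : Y => msg k j i) F) (p : Fin d) :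
    v p ≤ benignMax hB x k p := by
  refine mem_of_mem_Psi_of_card_inter_le (g := fun j => msg k j i) (B := Fset)
    (convex_coord_le p (benignMax hB x k p)) hv ((card_le_card ?_).trans (hlocal i))
    fun j _ hj => ?_
  · rw [inter_comm]
    exact inter_subset_inter_left hY
  · show msg k j i p ≤ _
    rw [h.benign_msg k j i hj]
    exact le_benignMax hB hj

lemma succ_le {k : ℕ} {i : V} (hi : i ∉ Fset) (p : Fin d) :
    x (k + 1) i p ≤ (x k i p + 2 * benignMax hB x k p) / 3 := by
  obtain ⟨Y, Z, yv, zv, hY, hZ, -, -, -, -, hyv, hzv, hx⟩ := h.update k i hi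
  have hy := h.coord_le_benignMax hB hlocal hY hyv p
  have hz := h.coord_le_benignMax hB hlocal hZ hzv p
  simp only [hx, one_div, Pi.smul_apply, Pi.add_apply, smul_eq_mul]
  linarith

/-- At a time when coordinate `p` is the sorted one, `(d+1)F+1` neighbours below `c`
leave at least `dF+1` benign ones, which forces the low middle point below `c`. -/
lemma succ_le_of_le_card_sdiff {k : ℕ} {p : Fin d} (hk : k % d = p) {i : V} (hi : i ∉ Fset)
    {X : Finset V} {c : ℝ} (hX : ∀ j ∉ X, j ∉ Fset → x k j p ≤ c)
    (hcard : (d + 1) * F + 1 ≤ #(G.neighborFinset i \ X)) :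
    x (k + 1) i p ≤ (x k i p + c + benignMax hB x k p) / 3 := by
  obtain ⟨Y, Z, yv, zv, hY, hZ, hYc, -, hYs, -, hyv, hzv, hx⟩ := h.update k i hi
  obtain rfl : (⟨k % d, Nat.mod_lt k hd⟩ : Fin d) = p := Fin.ext hk
  have hW : #Y - F ≤ #((G.neighborFinset i \ X) \ Fset) := by
    have h₁ := card_sdiff_add_card_inter (G.neighborFinset i \ X) Fset
    have h₂ : #((G.neighborFinset i \ X) ∩ Fset) ≤ F := by
      refine (card_le_card ?_).trans (hlocal i)
      rw [inter_comm]
      exact inter_subset_inter_left sdiff_subset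
    omega
  have hWc : ∀ j ∈ (G.neighborFinset i \ X) \ Fset, msg k j i ⟨k % d, Nat.mod_lt k hd⟩ ≤ c := by
    intro j hj
    simp only [mem_sdiff] at hj
    rw [h.benign_msg k j i hj.2]
    exact hX j hj.1.2 hj.2
  have hy := coord_le_of_mem_Psi_of_sorted (g := fun j => msg k j i) hyv hYs
    (sdiff_subset.trans sdiff_subset) hWc hW
  have hz := h.coord_le_benignMax hB hlocal hZ hzv ⟨k % d, Nat.mod_lt k hd⟩
  simp only [hx, one_div, Pi.smul_apply, Pi.add_apply, smul_eq_mul]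
  linarith

lemma benignMax_succ_le (k : ℕ) (p : Fin d) :
    benignMax hB x (k + 1) p ≤ benignMax hB x k p :=
  benignMax_le hB fun i hi => by
    linarith [h.succ_le hB hlocal (k := k) hi p, le_benignMax hB (x := x) (k := k) (p := p) hi]

lemma antitone_benignMax (p : Fin d) : Antitone fun k => benignMax hB x k p :=
  antitone_nat_of_succ_le fun k => h.benignMax_succ_le hB hlocal k p

lemma levelAbove_succ_subset {k : ℕ} {p : Fin d} {c η : ℝ} (hM : benignMax hB x k p ≤ c) :
    levelAbove Fset x (k + 1) p (c - η / 3) ⊆ levelAbove Fset x k p (c - η) := by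
  intro i hi
  simp only [levelAbove, mem_filter, mem_compl] at hi ⊢
  refine ⟨hi.1, not_le.1 fun hle => ?_⟩
  linarith [h.succ_le hB hlocal (k := k) hi.1 p, hi.2]

lemma levelAbove_succ_ssubset {k : ℕ} {p : Fin d} (hk : k % d = p) {c η : ℝ}
    (hM : benignMax hB x k p ≤ c) {i : V} (hi : i ∈ levelAbove Fset x k p (c - η))
    (hcard : (d + 1) * F + 1 ≤ #(G.neighborFinset i \ levelAbove Fset x k p (c - η))) :
    levelAbove Fset x (k + 1) p (c - η / 3) ⊂ levelAbove Fset x k p (c - η) := by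
  refine ssubset_of_subset_of_ne (h.levelAbove_succ_subset hB hlocal hM) fun heq => ?_
  rw [← heq] at hi
  simp only [levelAbove, mem_filter, mem_compl] at hi
  have hX : ∀ j ∉ levelAbove Fset x k p (c - η), j ∉ Fset → x k j p ≤ c - η := fun j hj hjF =>
    not_lt.1 fun hlt => hj (mem_filter.2 ⟨mem_compl.2 hjF, hlt⟩)
  have hstep := h.succ_le_of_le_card_sdiff hB hlocal hk hi.1 hX (heq ▸ hcard)
  have hxi := le_benignMax hB (x := x) (k := k) (p := p) hi.1
  linarith [hi.2]

lemma card_levelAbove_add_lt (hrobust : RRobust G ((d + 1) * F + 1)) {k : ℕ} {p : Fin d}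
    (hk : k % d = p) {c c' η : ℝ} (hM : benignMax hB x k p ≤ c)
    (hM' : benignMax hB (-x) k p ≤ c')
    (hdisj : Disjoint (levelAbove Fset x k p (c - η)) (levelAbove Fset (-x) k p (c' - η)))
    (hX : (levelAbove Fset x k p (c - η)).Nonempty)
    (hZ : (levelAbove Fset (-x) k p (c' - η)).Nonempty) :
    #(levelAbove Fset x (k + 1) p (c - η / 3)) + #(levelAbove Fset (-x) (k + 1) p (c' - η / 3)) <
      #(levelAbove Fset x k p (c - η)) + #(levelAbove Fset (-x) k p (c' - η)) := by
  have hXuniv : levelAbove Fset x k p (c - η) ≠ univ := fun heq =>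
    disjoint_right.1 hdisj hZ.choose_spec (heq ▸ mem_univ _)
  have hZuniv : levelAbove Fset (-x) k p (c' - η) ≠ univ := fun heq =>
    disjoint_left.1 hdisj hX.choose_spec (heq ▸ mem_univ _)
  rcases hrobust _ _ hX hZ hdisj hXuniv hZuniv with ⟨i, hi, hcard⟩ | ⟨i, hi, hcard⟩
  · exact add_lt_add_of_lt_of_le
      (card_lt_card (h.levelAbove_succ_ssubset hB hlocal hk hM hi hcard))
      (card_le_card (h.neg.levelAbove_succ_subset hB hlocal hM'))
  · exact add_lt_add_of_le_of_lt (card_le_card (h.levelAbove_succ_subset hB hlocal hM))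
      (card_lt_card (h.neg.levelAbove_succ_ssubset hB hlocal hk hM' hi hcard))

lemma antitone_benignSpread (p : Fin d) : Antitone fun k => benignSpread hB x k p :=
  (h.antitone_benignMax hB hlocal p).add (h.neg.antitone_benignMax hB hlocal p)

lemma benignSpread_add_le (hrobust : RRobust G ((d + 1) * F + 1)) (p : Fin d) (k₀ : ℕ) :
    benignSpread hB x (k₀ + (#Fsetᶜ + 1) * d) p ≤
      (1 - 1 / (2 * 3 ^ ((#Fsetᶜ + 1) * d))) * benignSpread hB x k₀ p := by
  set L := (#Fsetᶜ + 1) * d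
  set M := benignMax hB x k₀ p
  set M' := benignMax hB (-x) k₀ p
  have hD : 0 ≤ M + M' := benignSpread_nonneg hB
  set η : ℕ → ℝ := fun s => (M + M') / (2 * 3 ^ s)
  have hη : ∀ s, η (s + 1) = η s / 3 := fun s => by
    simp only [η, pow_succ]
    ring
  have hη₂ : ∀ s, 2 * η s ≤ M + M' := fun s => by
    rw [show 2 * η s = (M + M') / 3 ^ s by simp only [η]; ring]
    exact div_le_self hD (one_le_pow₀ (by norm_num))
  have hM : ∀ s, benignMax hB x (k₀ + s) p ≤ M := fun s =>
    h.antitone_benignMax hB hlocal p (Nat.le_add_right _ _)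
  have hM' : ∀ s, benignMax hB (-x) (k₀ + s) p ≤ M' := fun s =>
    h.neg.antitone_benignMax hB hlocal p (Nat.le_add_right _ _)
  set X : ℕ → Finset V := fun s => levelAbove Fset x (k₀ + s) p (M - η s)
  set Z : ℕ → Finset V := fun s => levelAbove Fset (-x) (k₀ + s) p (M' - η s)
  have hX : Antitone X := antitone_nat_of_succ_le fun s => by
    show levelAbove Fset x (k₀ + s + 1) p (M - η (s + 1)) ⊆ _
    exact hη s ▸ h.levelAbove_succ_subset hB hlocal (hM s)
  have hZ : Antitone Z := antitone_nat_of_succ_le fun s => by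
    show levelAbove Fset (-x) (k₀ + s + 1) p (M' - η (s + 1)) ⊆ _
    exact hη s ▸ h.neg.levelAbove_succ_subset hB hlocal (hM' s)
  have hempty : ¬ ((X L).Nonempty ∧ (Z L).Nonempty) := by
    refine not_of_antitone_of_forall_exists_lt (P := fun s => (X s).Nonempty ∧ (Z s).Nonempty)
      (f := fun s => #(X s) + #(Z s)) (N := #Fsetᶜ)
      (fun s t hst hPt => ⟨hPt.1.mono (hX hst), hPt.2.mono (hZ hst)⟩)
      (fun s t hst => add_le_add (card_le_card (hX hst)) (card_le_card (hZ hst))) (fun s => ?_) ?_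
    · obtain ⟨t, htd, ht⟩ := exists_lt_add_mod_eq p.isLt (k₀ + s)
      refine ⟨s + t, by omega, by omega, fun hP => ?_⟩
      have hlt := h.card_levelAbove_add_lt hB hlocal hrobust (by rwa [← add_assoc]) (hM _) (hM' _)
        (disjoint_levelAbove_neg (hη₂ _)) hP.1 hP.2
      rw [← hη] at hlt
      exact hlt
    · rw [← card_union_of_disjoint (disjoint_levelAbove_neg (hη₂ 0))]
      exact card_le_card (union_subset (filter_subset _ _) (filter_subset _ _))
  have hL : benignSpread hB x (k₀ + L) p ≤ M + M' - η L := by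
    unfold benignSpread
    rcases not_and_or.1 hempty with hXL | hZL
    · linarith [benignMax_le_of_levelAbove_eq_empty hB (not_nonempty_iff_eq_empty.1 hXL), hM' L]
    · linarith [benignMax_le_of_levelAbove_eq_empty hB (not_nonempty_iff_eq_empty.1 hZL), hM L]
  calc benignSpread hB x (k₀ + L) p ≤ M + M' - η L := hL
    _ = (1 - 1 / (2 * 3 ^ L)) * (M + M') := by simp only [η]; ring

lemma exists_sum_benignSpread_le (hrobust : RRobust G ((d + 1) * F + 1)) :
    ∃ C γ : ℝ, 0 ≤ C ∧ 0 ≤ γ ∧ γ < 1 ∧ ∀ k, ∑ p, benignSpread hB x k p ≤ C * γ ^ k := by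
  set L := (#Fsetᶜ + 1) * d
  have hε : 0 < 1 / (2 * (3 : ℝ) ^ L) ∧ 1 / (2 * (3 : ℝ) ^ L) < 1 := by
    refine ⟨by positivity, (div_lt_one (by positivity)).2 ?_⟩
    linarith [one_le_pow₀ (M₀ := ℝ) (n := L) (by norm_num : (1 : ℝ) ≤ 3)]
  refine exists_geometric_bound_of_le_mul (L := L) (θ := 1 - 1 / (2 * 3 ^ L))
    (fun k k' hk => sum_le_sum fun p _ => h.antitone_benignSpread hB hlocal p hk)
    (sum_nonneg fun p _ => benignSpread_nonneg hB) (Nat.mul_pos (Nat.succ_pos _) hd)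
    (by linarith [hε.2]) (by linarith [hε.1]) fun k => ?_
  rw [mul_sum]
  exact sum_le_sum fun p _ => h.benignSpread_add_le hB hlocal hrobust p k

end Algo1

theorem stmt12 {V : Type*} [Fintype V] [DecidableEq V]
    (d F : ℕ) (hd : 0 < d) (G : SimpleGraph V) [DecidableRel G.Adj]
    (Fset : Finset V) (x : ℕ → V → (Fin d → ℝ))
    (msg : ℕ → V → V → (Fin d → ℝ))
    (halg : Algo1 d F hd G Fset x msg)
    (hB : (Fsetᶜ : Finset V).Nonempty)
    (hlocal : ∀ i : V, (Fset ∩ G.neighborFinset i).card ≤ F)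
    (hrobust : RRobust G ((d + 1) * F + 1)) :
    ∃ (xbar : Fin d → ℝ) (C γ : ℝ), 0 ≤ C ∧ 0 ≤ γ ∧ γ < 1 ∧
      ∀ (i : V), i ∉ Fset → ∀ k : ℕ, ‖x k i - xbar‖ ≤ C * γ ^ k := by
  obtain ⟨C, γ, hC, hγ₀, hγ₁, hS⟩ := halg.exists_sum_benignSpread_le hB hlocal hrobust
  choose xbar hxbar using fun p => exists_forall_neg_le_le_of_antitone
    (halg.antitone_benignMax hB hlocal p) (halg.neg.antitone_benignMax hB hlocal p)
    (fun k => benignSpread_nonneg hB (k := k))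
  refine ⟨xbar, C, γ, hC, hγ₀, hγ₁, fun i hi k => ?_⟩
  have hS₀ : 0 ≤ ∑ p, benignSpread hB x k p := sum_nonneg fun p _ => benignSpread_nonneg hB
  refine ((pi_norm_le_iff_of_nonneg hS₀).2 fun p => ?_).trans (hS k)
  calc ‖(x k i - xbar) p‖ ≤ benignSpread hB x k p := abs_sub_le_benignSpread hB hi (hxbar p k)
    _ ≤ ∑ p, benignSpread hB x k p :=
      single_le_sum (f := fun p => benignSpread hB x k p) (fun p _ => benignSpread_nonneg hB)
        (mem_univ p)
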